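/- arXiv:2507.06132 — 6 statements merged into one kernel-verified Lean document; each statement's English description precedes it below -/
import Mathlib

section
/- Let Γ be a group with trivial center and G a finitely generated nilpotent group. Then every automorphism φ of the direct product Γ × G has the form φ(γ, g) = (α(γ), ρ(γ)·L(g)) for all (γ, g) ∈ Γ × G, where α : Γ → Γ and L : G → G are group automorphisms and ρ : Γ → C(G) is a group homomorphism into the center of G. -/
/-!
Since `Γ` is centerless, its upper central series is trivial, while that of `G` reaches `G`;
the upper central series of `Γ × G` is computed factorwise, so one of its terms is `1 × G`.
Hence `1 × G` is characteristic. An automorphism `φ` therefore restricts to an automorphism `L`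
of `1 × G` and descends to `(Γ × G) ⧸ (1 × G) ≅ Γ`, inducing an automorphism `α` of `Γ`;
the remaining component `ρ γ = (φ (γ, 1)).2` is central because `(γ, 1)` commutes with
`1 × G`.
-/

namespace Subgroup

theorem upperCentralSeries_prod (Γ G : Type*) [Group Γ] [Group G] (n : ℕ) :
    upperCentralSeries (Γ × G) n = (upperCentralSeries Γ n).prod (upperCentralSeries G n) := by
  induction n with
  | zero => exact bot_prod_bot.symm
  | succ n ih =>
    ext ⟨γ, g⟩
    simp only [mem_prod, mem_upperCentralSeries_succ_iff, ih, Prod.forall]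
    exact ⟨fun h => ⟨fun δ => (h δ 1).1, fun k => (h 1 k).2⟩,
      fun h δ k => ⟨h.1 δ, h.2 k⟩⟩

theorem upperCentralSeries_eq_bot_of_center_eq_bot {Γ : Type*} [Group Γ]
    (hΓ : center Γ = ⊥) (n : ℕ) : upperCentralSeries Γ n = ⊥ := by
  induction n with
  | zero => rfl
  | succ n ih =>
    rw [eq_bot_iff, ← hΓ]
    intro x hx
    rw [mem_upperCentralSeries_succ_iff, ih] at hx
    exact mem_center_iff.mpr fun y => (commutatorElement_eq_one_iff_commute.mp (hx y)).symm

theorem characteristic_bot_prod_top {Γ G : Type*} [Group Γ] [Group G]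
    (hΓ : center Γ = ⊥) [Group.IsNilpotent G] :
    ((⊥ : Subgroup Γ).prod (⊤ : Subgroup G)).Characteristic := by
  obtain ⟨n, hn⟩ := Group.IsNilpotent.nilpotent G
  rw [← hn, ← upperCentralSeries_eq_bot_of_center_eq_bot hΓ n, ← upperCentralSeries_prod]
  infer_instance

end Subgroup

namespace MulEquiv

variable {Γ G : Type*} [Group Γ] [Group G]
  (hchar : ((⊥ : Subgroup Γ).prod (⊤ : Subgroup G)).Characteristic) (φ : (Γ × G) ≃* (Γ × G))

include hchar

theorem apply_one_mk (g : G) : φ (1, g) = (1, (φ (1, g)).2) := by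
  have hg : ((1 : Γ), g) ∈ (⊥ : Subgroup Γ).prod (⊤ : Subgroup G) := ⟨rfl, trivial⟩
  rw [← hchar.fixed φ] at hg
  exact Prod.ext hg.1 rfl

theorem fst_apply_mk (γ : Γ) (g : G) : (φ (γ, g)).1 = (φ (γ, 1)).1 := by
  have hsplit : (γ, g) = (γ, 1) * (1, g) := by simp
  rw [hsplit, map_mul, apply_one_mk hchar φ g, Prod.fst_mul, mul_one]

def prodLeftAut : Γ ≃* Γ :=
  MonoidHom.toMulEquiv
    ((MonoidHom.fst Γ G).comp ((φ : Γ × G →* Γ × G).comp (MonoidHom.inl Γ G)))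
    ((MonoidHom.fst Γ G).comp ((φ.symm : Γ × G →* Γ × G).comp (MonoidHom.inl Γ G)))
    (MonoidHom.ext fun γ => by
      simpa using (fst_apply_mk hchar φ.symm (φ (γ, 1)).1 (φ (γ, 1)).2).symm)
    (MonoidHom.ext fun γ => by
      simpa using (fst_apply_mk hchar φ (φ.symm (γ, 1)).1 (φ.symm (γ, 1)).2).symm)

def prodRightAut : G ≃* G :=
  MonoidHom.toMulEquiv
    ((MonoidHom.snd Γ G).comp ((φ : Γ × G →* Γ × G).comp (MonoidHom.inr Γ G)))
    ((MonoidHom.snd Γ G).comp ((φ.symm : Γ × G →* Γ × G).comp (MonoidHom.inr Γ G)))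
    (MonoidHom.ext fun g => by
      change (φ.symm (1, (φ (1, g)).2)).2 = g
      rw [← apply_one_mk hchar, symm_apply_apply])
    (MonoidHom.ext fun g => by
      change (φ (1, (φ.symm (1, g)).2)).2 = g
      rw [← apply_one_mk hchar, apply_symm_apply])

def prodCenterHom : Γ →* Subgroup.center G :=
  MonoidHom.codRestrict
    ((MonoidHom.snd Γ G).comp ((φ : Γ × G →* Γ × G).comp (MonoidHom.inl Γ G))) (Subgroup.center G)
    fun γ => Subgroup.mem_center_iff.mpr fun g => by
      obtain ⟨h, rfl⟩ := (prodRightAut hchar φ).surjective g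
      have hcomm : Commute ((1 : Γ), h) (γ, 1) :=
        Prod.commute_iff.mpr ⟨.one_left γ, .one_right h⟩
      exact (Prod.commute_iff.mp (hcomm.map φ)).2

theorem apply_mk_eq (γ : Γ) (g : G) :
    φ (γ, g) =
      (prodLeftAut hchar φ γ, (prodCenterHom hchar φ γ : G) * prodRightAut hchar φ g) := by
  have hsplit : (γ, g) = (γ, 1) * (1, g) := by simp
  refine Prod.ext (fst_apply_mk hchar φ γ g) ?_
  rw [hsplit, map_mul, Prod.snd_mul]
  rfl

end MulEquiv

theorem product_automorphism_form_general
    (Γ G : Type*) [Group Γ] [Group G]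
    (hΓ : Subgroup.center Γ = ⊥)
    [Group.IsNilpotent G]
    (φ : (Γ × G) ≃* (Γ × G)) :
    ∃ (α : Γ ≃* Γ) (L : G ≃* G) (ρ : Γ →* Subgroup.center G),
      ∀ (γ : Γ) (g : G), φ (γ, g) = (α γ, (ρ γ : G) * L g) := by
  have hchar := Subgroup.characteristic_bot_prod_top (G := G) hΓ
  exact ⟨φ.prodLeftAut hchar, φ.prodRightAut hchar, φ.prodCenterHom hchar,
    φ.apply_mk_eq hchar⟩

/-- Neofytidis / Lemma 2.1 in the paper.
Let `Γ` be a group with trivial center and `G` a finitely generated nilpotent group.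
Then every automorphism `φ` of `Γ × G` has the form
`φ (γ, g) = (α γ, ρ γ * L g)`, where `α : Γ ≃* Γ` and `L : G ≃* G` are automorphisms
and `ρ : Γ →* center G` is a homomorphism into the center of `G`. -/
theorem product_automorphism_form
    (Γ G : Type*) [Group Γ] [Group G]
    (hΓ : Subgroup.center Γ = ⊥)
    [Group.FG G] [Group.IsNilpotent G]
    (φ : (Γ × G) ≃* (Γ × G)) :
    ∃ (α : Γ ≃* Γ) (L : G ≃* G) (ρ : Γ →* Subgroup.center G),
      ∀ (γ : Γ) (g : G), φ (γ, g) = (α γ, (ρ γ : G) * L g) :=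
  product_automorphism_form_general Γ G hΓ φ
end

section
/- Every injective group endomorphism ψ of a finitely generated abelian group A has image of finite index in A, i.e. [A : ψ(A)] < ∞. -/
/-!
An injective endomorphism `f` of a finitely generated module over a domain maps it isomorphically
onto its range, so by rank–nullity the cokernel has rank zero, i.e. it is torsion. For `ℤ`-modules
a finitely generated torsion module is finite.
-/

namespace LinearMap

variable {R M : Type*} [CommRing R] [IsDomain R] [AddCommGroup M] [Module R M] [Module.Finite R M]
  {f : M →ₗ[R] M}

theorem rank_quotient_range_eq_zero_of_injective (hf : Function.Injective f) :
    Module.rank R (M ⧸ range f) = 0 := by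
  have hsum := rank_quotient_add_rank_of_isDomain (range f)
  rw [(LinearEquiv.ofInjective f hf).rank_eq.symm] at hsum
  exact Cardinal.eq_of_add_eq_add_right (hsum.trans (zero_add _).symm) (Module.rank_lt_aleph0 R M)

theorem exists_smul_mem_range_of_injective (hf : Function.Injective f) (x : M) :
    ∃ a : R, a ≠ 0 ∧ a • x ∈ range f := by
  obtain ⟨a, ha, hax⟩ := rank_eq_zero_iff.mp (rank_quotient_range_eq_zero_of_injective hf)
    (Submodule.Quotient.mk x)
  exact ⟨a, ha, (Submodule.Quotient.mk_eq_zero _).mp hax⟩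

end LinearMap

theorem MonoidHom.exists_zpow_mem_range_of_injective {G : Type*} [CommGroup G] [Group.FG G]
    {ψ : G →* G} (hψ : Function.Injective ψ) (g : G) :
    ∃ n : ℤ, n ≠ 0 ∧ g ^ n ∈ ψ.range := by
  obtain ⟨n, hn, y, hy⟩ := LinearMap.exists_smul_mem_range_of_injective
    (f := ψ.toAdditive.toIntLinearMap) hψ (Additive.ofMul g)
  exact ⟨n, hn, y.toMul, hy⟩

/-- Every injective endomorphism `ψ` of a finitely generated
abelian group `A` has image of finite index in `A`. -/
theorem injective_endo_finite_index (A : Type*) [CommGroup A] [Group.FG A]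
    (ψ : A →* A) (hψ : Function.Injective ψ) :
    ψ.range.FiniteIndex := by
  suffices Finite (A ⧸ ψ.range) from Subgroup.finiteIndex_of_finite_quotient
  refine CommGroup.finite_of_fg_isMulTorsion _ fun q ↦ ?_
  obtain ⟨a, rfl⟩ := QuotientGroup.mk_surjective q
  obtain ⟨n, hn, han⟩ := ψ.exists_zpow_mem_range_of_injective hψ a
  exact isOfFinOrder_iff_zpow_eq_one.mpr ⟨n, hn, (QuotientGroup.eq_one_iff _).mpr han⟩
end

section
/- Let Γ be a group, G a finitely generated nilpotent group, α an inner automorphism of Γ, L an automorphism of G with trivial fixed subgroup Fix(L) = {1}, and ρ : Γ → C(G) a homomorphism into the center of G. Let φ be the automorphism of Γ × G given by φ(γ, g) = (α(γ), ρ(γ)·L(g)). Define ψ : C(G) → C(G) by ψ(g) = L(g)·g⁻¹ (which is injective since Fix(L) is trivial), set Γ' := ρ⁻¹(ψ(C(G))), and let θ := ψ⁻¹ ∘ ρ : Γ' → C(G). Then the map h(γ, g) = (γ, θ(γ)·g) is an automorphism of Γ' × G, φ restricts to an automorphism of Γ' × G, and h ∘ φ ∘ h⁻¹ = (α|_{Γ'})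 × L on Γ' × G, i.e. h(φ(h⁻¹(γ, g))) = (α(γ), L(g)) for all (γ, g) ∈ Γ' × G. In particular, Γ' = Γ when ψ is surjective. -/
/-!
On `Γ × G` the automorphism `φ` is `α × L` followed by the shear `(γ, g) ↦ (γ, ρ(α⁻¹ γ) * g)`
by the central homomorphism `ρ`. Since `C(G)` is abelian, `ρ` is conjugation invariant; hence
`Γ' = ρ⁻¹(ψ(C(G)))` is normal, so `α`-stable, and `θ = ψ⁻¹ ∘ ρ` is `α`-invariant. On `Γ'` the
twist `ρ = ψ ∘ θ` is the coboundary `γ ↦ L(θ γ) * (θ γ)⁻¹`, which the shear by `θ` removes.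
-/

open Subgroup

theorem MonoidHom.map_conj_eq_of_isMulCommutative {Γ M : Type*} [Group Γ] [Group M]
    [IsMulCommutative M] (f : Γ →* M) (a b : Γ) : f (a * b * a⁻¹) = f b := by
  rw [map_mul, map_mul, map_inv, mul_comm' (f a), mul_inv_cancel_right]

theorem injective_of_coe_eq_map_mul_inv {G : Type*} [Group G] {S T : Subgroup G} (L : G ≃* G)
    (hL : ∀ g, L g = g → g = 1) (ψ : S →* T) (hψ : ∀ g : S, (ψ g : G) = L g * (g : G)⁻¹) :
    Function.Injective ψ :=
  (injective_iff_map_eq_one ψ).mpr fun g hg => Subtype.ext <| hL g <| by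
    rw [← mul_inv_eq_one, ← hψ, hg, OneMemClass.coe_one]

section CentralShear

variable {K G : Type*} [Group K] [Group G]

def centralShear (θ : K →* center G) : (K × G) ≃* (K × G) where
  toFun p := (p.1, θ p.1 * p.2)
  invFun p := (p.1, (θ p.1 : G)⁻¹ * p.2)
  left_inv p := by simp
  right_inv p := by simp
  map_mul' p q := by
    ext
    · rfl
    · simp only [Prod.fst_mul, Prod.snd_mul, map_mul, coe_mul, mul_assoc,
        ← mul_assoc (θ q.1 : G), ← mem_center_iff.mp (θ q.1).2 p.2]

theorem centralShear_apply (θ : K →* center G) (p : K × G) :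
    centralShear θ p = (p.1, θ p.1 * p.2) := rfl

theorem centralShear_symm_apply (θ : K →* center G) (p : K × G) :
    (centralShear θ).symm p = (p.1, (θ p.1 : G)⁻¹ * p.2) := rfl

def prodTwist (α : K ≃* K) (L : G ≃* G) (χ : K →* center G) : (K × G) ≃* (K × G) :=
  (α.prodCongr L).trans (centralShear (χ.comp α.symm.toMonoidHom))

theorem prodTwist_apply (α : K ≃* K) (L : G ≃* G) (χ : K →* center G) (p : K × G) :
    prodTwist α L χ p = (α p.1, χ p.1 * L p.2) := by
  change (α p.1, χ (α.symm (α p.1)) * L p.2) = _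
  rw [α.symm_apply_apply]

theorem centralShear_conj_prodTwist (α : K ≃* K) (L : G ≃* G) (χ θ : K →* center G)
    (hθ : ∀ k, θ (α k) = θ k) (hχ : ∀ k, (χ k : G) = L (θ k) * (θ k : G)⁻¹) :
    (centralShear θ).symm.trans ((prodTwist α L χ).trans (centralShear θ)) = α.prodCongr L := by
  ext p
  · rfl
  · have hcomm := mem_center_iff.mp (θ p.1).2 (L (θ p.1))
    simp only [MulEquiv.trans_apply, centralShear_symm_apply, prodTwist_apply,
      centralShear_apply, hθ, hχ, map_mul, map_inv]
    change _ = L p.2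
    simp only [← mul_assoc]
    rw [← hcomm]
    group

end CentralShear

theorem conjugate_to_product_automorphism_general
    (Γ G : Type*) [Group Γ] [Group G]
    (γ₀ : Γ) (L : G ≃* G) (hL : ∀ g : G, L g = g → g = 1)
    (ρ : Γ →* Subgroup.center G)
    (φ : (Γ × G) ≃* (Γ × G))
    (hφ : ∀ (γ : Γ) (g : G), φ (γ, g) = (γ₀ * γ * γ₀⁻¹, (ρ γ : G) * L g))
    (ψ : Subgroup.center G →* Subgroup.center G)
    (hψ : ∀ g : Subgroup.center G, (ψ g : G) = L (g : G) * (g : G)⁻¹)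
    (θ : ↥(Subgroup.comap ρ ψ.range) →* Subgroup.center G)
    (hθ : ∀ γ : ↥(Subgroup.comap ρ ψ.range), ψ (θ γ) = ρ (γ : Γ)) :
    -- `φ` maps `Γ' × G` into itself
    (∀ γ : Γ, γ ∈ Subgroup.comap ρ ψ.range →
      ∀ g : G, (φ (γ, g)).1 ∈ Subgroup.comap ρ ψ.range) ∧
    -- `h` is an automorphism of `Γ' × G`, `φ` restricts to `φ'` on `Γ' × G`,
    -- and `h ∘ φ' ∘ h⁻¹ = α × L`
    (∃ h : (↥(Subgroup.comap ρ ψ.range) × G) ≃* (↥(Subgroup.comap ρ ψ.range) × G),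
      (∀ (γ : ↥(Subgroup.comap ρ ψ.range)) (g : G),
        h (γ, g) = (γ, (θ γ : G) * g)) ∧
      ∃ φ' : (↥(Subgroup.comap ρ ψ.range) × G) ≃* (↥(Subgroup.comap ρ ψ.range) × G),
        (∀ (γ : ↥(Subgroup.comap ρ ψ.range)) (g : G),
          ((((φ' (γ, g)).1 : Γ)), (φ' (γ, g)).2) = φ ((γ : Γ), g)) ∧
        (∀ (γ : ↥(Subgroup.comap ρ ψ.range)) (g : G),
          ((((h (φ' (h.symm (γ, g)))).1 : Γ)), (h (φ' (h.symm (γ, g)))).2)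
            = (γ₀ * (γ : Γ) * γ₀⁻¹, L g))) ∧
    -- in particular `Γ' = Γ` if `ψ` is surjective
    (Function.Surjective ψ → Subgroup.comap ρ ψ.range = ⊤) := by
  have hψ_inj := injective_of_coe_eq_map_mul_inv L hL ψ hψ
  let α : comap ρ ψ.range ≃* comap ρ ψ.range := MulAut.conjNormal γ₀
  have hθα : ∀ γ, θ (α γ) = θ γ := fun γ => hψ_inj <| by
    rw [hθ, hθ, MulAut.conjNormal_apply, ρ.map_conj_eq_of_isMulCommutative]
  have hρθ : ∀ γ, (ρ.comp (comap ρ ψ.range).subtype γ : G) = L (θ γ) * (θ γ : G)⁻¹ := fun γ => by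
    rw [← hψ, hθ]; rfl
  refine ⟨fun γ hγ g => ?_, ⟨centralShear θ, fun _ _ => rfl,
    prodTwist α L (ρ.comp (comap ρ ψ.range).subtype), fun γ g => ?_, fun γ g => ?_⟩, fun hs => ?_⟩
  · rw [hφ]
    exact (inferInstance : (comap ρ ψ.range).Normal).conj_mem γ hγ γ₀
  · rw [hφ, prodTwist_apply, MulAut.conjNormal_apply]
    rfl
  · rw [← MulEquiv.trans_apply, ← MulEquiv.trans_apply,
      centralShear_conj_prodTwist α L _ θ hθα hρθ]
    exact Prod.ext (MulAut.conjNormal_apply γ₀ γ) rfl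
  · rw [MonoidHom.range_eq_top.mpr hs, comap_top]

/-- Lemma 2.3 in the paper. Let `Γ` be a group, `G` a finitely
generated nilpotent group, `α` the inner automorphism of `Γ` given by conjugation
by `γ₀`, `L : G ≃* G` an automorphism with trivial fixed subgroup, and
`ρ : Γ →* C(G)` a homomorphism into the center.  Let `φ` be the automorphism of
`Γ × G` given by `φ (γ, g) = (γ₀ γ γ₀⁻¹, ρ γ * L g)`.  With `ψ g = L g * g⁻¹`
(injective on `C(G)`), `Γ' = ρ⁻¹(ψ(C(G)))`, and `θ = ψ⁻¹ ∘ ρ : Γ' → C(G)` (i.e.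
`ψ (θ γ) = ρ γ`), the map `h (γ, g) = (γ, θ γ * g)` is an automorphism of
`Γ' × G`, `φ` restricts to an automorphism `φ'` of `Γ' × G`, and
`h ∘ φ' ∘ h⁻¹ = α × L` on `Γ' × G`.  In particular `Γ' = Γ` when `ψ` is
surjective. -/
theorem conjugate_to_product_automorphism
    (Γ G : Type*) [Group Γ] [Group G] [Group.FG G] [Group.IsNilpotent G]
    (γ₀ : Γ) (L : G ≃* G) (hL : ∀ g : G, L g = g → g = 1)
    (ρ : Γ →* Subgroup.center G)
    (φ : (Γ × G) ≃* (Γ × G))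
    (hφ : ∀ (γ : Γ) (g : G), φ (γ, g) = (γ₀ * γ * γ₀⁻¹, (ρ γ : G) * L g))
    (ψ : Subgroup.center G →* Subgroup.center G)
    (hψ : ∀ g : Subgroup.center G, (ψ g : G) = L (g : G) * (g : G)⁻¹)
    (θ : ↥(Subgroup.comap ρ ψ.range) →* Subgroup.center G)
    (hθ : ∀ γ : ↥(Subgroup.comap ρ ψ.range), ψ (θ γ) = ρ (γ : Γ)) :
    -- `φ` maps `Γ' × G` into itself
    (∀ γ : Γ, γ ∈ Subgroup.comap ρ ψ.range →
      ∀ g : G, (φ (γ, g)).1 ∈ Subgroup.comap ρ ψ.range) ∧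
    -- `h` is an automorphism of `Γ' × G`, `φ` restricts to `φ'` on `Γ' × G`,
    -- and `h ∘ φ' ∘ h⁻¹ = α × L`
    (∃ h : (↥(Subgroup.comap ρ ψ.range) × G) ≃* (↥(Subgroup.comap ρ ψ.range) × G),
      (∀ (γ : ↥(Subgroup.comap ρ ψ.range)) (g : G),
        h (γ, g) = (γ, (θ γ : G) * g)) ∧
      ∃ φ' : (↥(Subgroup.comap ρ ψ.range) × G) ≃* (↥(Subgroup.comap ρ ψ.range) × G),
        (∀ (γ : ↥(Subgroup.comap ρ ψ.range)) (g : G),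
          ((((φ' (γ, g)).1 : Γ)), (φ' (γ, g)).2) = φ ((γ : Γ), g)) ∧
        (∀ (γ : ↥(Subgroup.comap ρ ψ.range)) (g : G),
          ((((h (φ' (h.symm (γ, g)))).1 : Γ)), (h (φ' (h.symm (γ, g)))).2)
            = (γ₀ * (γ : Γ) * γ₀⁻¹, L g))) ∧
    -- in particular `Γ' = Γ` if `ψ` is surjective
    (Function.Surjective ψ → Subgroup.comap ρ ψ.range = ⊤) :=
  conjugate_to_product_automorphism_general Γ G γ₀ L hL ρ φ hφ ψ hψ θ hθ
end

section
/- Let Γ be a group, ρ : Γ → ℤ a surjective group homomorphism, and m ≥ 1, k ≥ 1 integers. Let L_m be the 2 × 2 integer matrix [[m+1, m], [1, 1]], and let φ be the automorphism of Γ × ℤ² given by φ(u, v) = (u, (ρ(u), 0) + L_m·v). Then Fix(φᵏ) = {(u, v) ∈ Γ × ℤ² : (I − L_m)·v = (ρ(u), 0)} = {(u, (0, t)) : u ∈ Γ, t ∈ ℤ, ρ(u) + m·t = 0}; consequently, the projection of Fix(φᵏ) to Γ equals ρ⁻¹(mℤ) and is a subgroup of index m in Γ. -/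
open Matrix Finset

lemma my_mulVec_inj {A : Matrix (Fin 2) (Fin 2) ℤ} (hA : A.det ≠ 0)
    {y z : Fin 2 → ℤ} (h : A.mulVec y = A.mulVec z) : y = z := by
  have h2 : A.adjugate.mulVec (A.mulVec y) = A.adjugate.mulVec (A.mulVec z) := by rw [h]
  rw [Matrix.mulVec_mulVec, Matrix.mulVec_mulVec, Matrix.adjugate_mul,
    Matrix.smul_mulVec, Matrix.smul_mulVec, Matrix.one_mulVec,
    Matrix.one_mulVec] at h2
  funext i
  have := congrFun h2 i
  simp only [Pi.smul_apply, smul_eq_mul] at this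
  exact mul_left_cancel₀ hA this

lemma my_entries (m : ℕ) (hm : 1 ≤ m) (n : ℕ) (hn : 1 ≤ n) :
    2 ≤ ((!![(m : ℤ) + 1, (m : ℤ); 1, 1]) ^ n) 0 0 ∧
    1 ≤ ((!![(m : ℤ) + 1, (m : ℤ); 1, 1]) ^ n) 0 1 ∧
    1 ≤ ((!![(m : ℤ) + 1, (m : ℤ); 1, 1]) ^ n) 1 0 ∧
    1 ≤ ((!![(m : ℤ) + 1, (m : ℤ); 1, 1]) ^ n) 1 1 := by
  have hm' : (1 : ℤ) ≤ (m : ℤ) := by exact_mod_cast hm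
  induction n, hn using Nat.le_induction with
  | base => simp [pow_one]; omega
  | succ n hn ih =>
    obtain ⟨h1, h2, h3, h4⟩ := ih
    rw [pow_succ]
    have e : ∀ i j, ((!![(m : ℤ) + 1, (m : ℤ); 1, 1]) ^ n * !![(m : ℤ) + 1, (m : ℤ); 1, 1]) i j
        = ((!![(m : ℤ) + 1, (m : ℤ); 1, 1]) ^ n) i 0 * (!![(m : ℤ) + 1, (m : ℤ); 1, 1]) 0 j
        + ((!![(m : ℤ) + 1, (m : ℤ); 1, 1]) ^ n) i 1 * (!![(m : ℤ) + 1, (m : ℤ); 1, 1]) 1 j := by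
      intro i j
      rw [Matrix.mul_apply, Fin.sum_univ_two]
    rw [e, e, e, e]
    have a00 : (!![(m : ℤ) + 1, (m : ℤ); 1, 1]) 0 0 = (m : ℤ) + 1 := rfl
    have a01 : (!![(m : ℤ) + 1, (m : ℤ); 1, 1]) 0 1 = (m : ℤ) := rfl
    have a10 : (!![(m : ℤ) + 1, (m : ℤ); 1, 1]) 1 0 = 1 := rfl
    have a11 : (!![(m : ℤ) + 1, (m : ℤ); 1, 1]) 1 1 = 1 := rfl
    rw [a00, a01, a10, a11]
    refine ⟨?_, ?_, ?_, ?_⟩ <;> nlinarith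

lemma my_detS (m : ℕ) (hm : 1 ≤ m) (k : ℕ) (hk : 1 ≤ k) :
    (∑ i ∈ range k, (!![(m : ℤ) + 1, (m : ℤ); 1, 1]) ^ i).det ≠ 0 := by
  set L : Matrix (Fin 2) (Fin 2) ℤ := !![(m : ℤ) + 1, (m : ℤ); 1, 1] with hL
  have key : (∑ i ∈ range k, L ^ i) * (1 - L) = 1 - L ^ k := by
    have := geom_sum_mul L k
    rw [mul_sub, mul_one] at this ⊢
    linear_combination (norm := noncomm_ring) -this
  have hdet : (∑ i ∈ range k, L ^ i).det * (1 - L).det = (1 - L ^ k).det := by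
    rw [← Matrix.det_mul, key]
  obtain ⟨h1, h2, h3, h4⟩ := my_entries m hm k hk
  have hdetLk : (L ^ k).det = 1 := by
    rw [Matrix.det_pow]
    have : L.det = 1 := by rw [hL, Matrix.det_fin_two_of]; ring
    rw [this, one_pow]
  have hne : (1 - L ^ k).det ≠ 0 := by
    rw [Matrix.det_fin_two] at hdetLk ⊢
    simp only [Matrix.sub_apply, Matrix.one_apply_eq, Matrix.one_apply_ne (by decide : (0:Fin 2) ≠ 1),
      Matrix.one_apply_ne (by decide : (1:Fin 2) ≠ 0)]
    nlinarith
  intro h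
  rw [h, zero_mul] at hdet
  exact hne hdet.symm

/-- Let `Γ` be a group, `ρ : Γ → ℤ` a surjective homomorphism
(with `ℤ` and `ℤ²` written multiplicatively), `m ≥ 1`, `k ≥ 1`, and let
`L_m = [[m+1, m], [1, 1]]`.  Let `φ` be the automorphism of `Γ × ℤ²` given by
`φ(u, v) = (u, (ρ(u), 0) + L_m·v)`.  Then
`Fix(φᵏ) = {(u, v) : (I − L_m)·v = (ρ(u), 0)} = {(u, (0, t)) : ρ(u) + m·t = 0}`;
consequently the projection of `Fix(φᵏ)` to `Γ` equals `ρ⁻¹(mℤ)` and is a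
subgroup of index `m` in `Γ`. -/
theorem fixed_points_of_torus_automorphism (Γ : Type*) [Group Γ]
    (ρ : Γ →* Multiplicative ℤ) (hρ : Function.Surjective ρ)
    (m : ℕ) (hm : 1 ≤ m) (k : ℕ) (hk : 1 ≤ k)
    (φ : (Γ × Multiplicative (Fin 2 → ℤ)) ≃* (Γ × Multiplicative (Fin 2 → ℤ)))
    (hφ : ∀ (u : Γ) (v : Multiplicative (Fin 2 → ℤ)),
      φ (u, v) = (u, Multiplicative.ofAdd
        (![Multiplicative.toAdd (ρ u), 0] +
          (!![(m : ℤ) + 1, (m : ℤ); 1, 1]).mulVec (Multiplicative.toAdd v)))) :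
    ({p : Γ × Multiplicative (Fin 2 → ℤ) | (⇑φ)^[k] p = p} =
      {p : Γ × Multiplicative (Fin 2 → ℤ) |
        ((1 : Matrix (Fin 2) (Fin 2) ℤ) - !![(m : ℤ) + 1, (m : ℤ); 1, 1]).mulVec
            (Multiplicative.toAdd p.2) = ![Multiplicative.toAdd (ρ p.1), 0]}) ∧
    ({p : Γ × Multiplicative (Fin 2 → ℤ) | (⇑φ)^[k] p = p} =
      {p : Γ × Multiplicative (Fin 2 → ℤ) | ∃ t : ℤ,
        Multiplicative.toAdd p.2 = ![0, t] ∧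
        Multiplicative.toAdd (ρ p.1) + (m : ℤ) * t = 0}) ∧
    (Prod.fst '' {p : Γ × Multiplicative (Fin 2 → ℤ) | (⇑φ)^[k] p = p} =
      {u : Γ | (m : ℤ) ∣ Multiplicative.toAdd (ρ u)}) ∧
    (∃ P : Subgroup Γ,
      (P : Set Γ) = {u : Γ | (m : ℤ) ∣ Multiplicative.toAdd (ρ u)} ∧ P.index = m) := by
  set L : Matrix (Fin 2) (Fin 2) ℤ := !![(m : ℤ) + 1, (m : ℤ); 1, 1] with hL
  -- iteration formula
  have hiter : ∀ (u : Γ) (v : Multiplicative (Fin 2 → ℤ)) (n : ℕ),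
      (⇑φ)^[n] (u, v) = (u, Multiplicative.ofAdd
        ((∑ i ∈ Finset.range n, L ^ i).mulVec ![Multiplicative.toAdd (ρ u), 0]
          + (L ^ n).mulVec (Multiplicative.toAdd v))) := by
    intro u v n
    induction n with
    | zero =>
      simp only [Function.iterate_zero, id_eq, Finset.range_zero, Finset.sum_empty,
        Matrix.zero_mulVec, pow_zero, Matrix.one_mulVec, zero_add, ofAdd_toAdd]
    | succ n ih =>
      rw [Function.iterate_succ_apply', ih, hφ]
      congr 1
      congr 1
      rw [toAdd_ofAdd, Matrix.mulVec_add, Matrix.mulVec_mulVec, Matrix.mulVec_mulVec,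
        ← pow_succ', geom_sum_succ, Matrix.add_mulVec, Matrix.one_mulVec]
      abel
  have key : (∑ i ∈ Finset.range k, L ^ i) * (1 - L) = 1 - L ^ k := by
    have := geom_sum_mul L k
    rw [mul_sub, mul_one] at this ⊢
    linear_combination (norm := noncomm_ring) -this
  -- fixed point characterization
  have hfix : ∀ p : Γ × Multiplicative (Fin 2 → ℤ), (⇑φ)^[k] p = p ↔
      ((1 : Matrix (Fin 2) (Fin 2) ℤ) - L).mulVec (Multiplicative.toAdd p.2)
        = ![Multiplicative.toAdd (ρ p.1), 0] := by
    rintro ⟨u, v⟩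
    rw [hiter u v k, Prod.mk.injEq]
    simp only [true_and]
    rw [show (Multiplicative.ofAdd
        ((∑ i ∈ Finset.range k, L ^ i).mulVec ![Multiplicative.toAdd (ρ u), 0]
          + (L ^ k).mulVec (Multiplicative.toAdd v)) = v) ↔
        ((∑ i ∈ Finset.range k, L ^ i).mulVec ![Multiplicative.toAdd (ρ u), 0]
          + (L ^ k).mulVec (Multiplicative.toAdd v) = Multiplicative.toAdd v) from
      ⟨fun h => by simpa using congrArg Multiplicative.toAdd h,
       fun h => by rw [h, ofAdd_toAdd]⟩]
    constructor
    · intro h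
      apply my_mulVec_inj (my_detS m hm k hk)
      rw [Matrix.mulVec_mulVec, key, Matrix.sub_mulVec, Matrix.one_mulVec]
      exact (eq_sub_of_add_eq h).symm
    · intro h
      have h2 : (∑ i ∈ Finset.range k, L ^ i).mulVec
          (((1 : Matrix (Fin 2) (Fin 2) ℤ) - L).mulVec (Multiplicative.toAdd v))
          = (∑ i ∈ Finset.range k, L ^ i).mulVec ![Multiplicative.toAdd (ρ u), 0] := by
        rw [h]
      rw [Matrix.mulVec_mulVec, key, Matrix.sub_mulVec, Matrix.one_mulVec] at h2
      rw [← h2]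
      abel
  have hset1 : ({p : Γ × Multiplicative (Fin 2 → ℤ) | (⇑φ)^[k] p = p} =
      {p : Γ × Multiplicative (Fin 2 → ℤ) |
        ((1 : Matrix (Fin 2) (Fin 2) ℤ) - L).mulVec
            (Multiplicative.toAdd p.2) = ![Multiplicative.toAdd (ρ p.1), 0]}) := by
    ext p; exact hfix p
  -- second description
  have hlin : ∀ (r : ℤ) (x : Fin 2 → ℤ),
      ((1 : Matrix (Fin 2) (Fin 2) ℤ) - L).mulVec x = ![r, 0] ↔
        ∃ t : ℤ, x = ![0, t] ∧ r + (m : ℤ) * t = 0 := by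
    intro r x
    have e0 : (((1 : Matrix (Fin 2) (Fin 2) ℤ) - L).mulVec x) 0
        = -(m : ℤ) * x 0 + -(m : ℤ) * x 1 := by
      rw [Matrix.mulVec, dotProduct, Fin.sum_univ_two]
      simp [hL, Matrix.sub_apply, Matrix.one_apply]
      try ring
    have e1 : (((1 : Matrix (Fin 2) (Fin 2) ℤ) - L).mulVec x) 1 = -x 0 := by
      rw [Matrix.mulVec, dotProduct, Fin.sum_univ_two]
      simp [hL, Matrix.sub_apply, Matrix.one_apply]
    constructor
    · intro h
      have h0 := congrFun h 0
      have h1 := congrFun h 1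
      rw [e0] at h0; rw [e1] at h1
      simp only [Matrix.cons_val_zero, Matrix.cons_val_one, Matrix.head_cons] at h0 h1
      have hx0 : x 0 = 0 := by linarith
      refine ⟨x 1, ?_, ?_⟩
      · funext i
        fin_cases i <;> simp [hx0]
      · rw [hx0] at h0; linarith
    · rintro ⟨t, rfl, ht⟩
      funext i
      fin_cases i
      · simp only [Fin.zero_eta]
        rw [e0]; simp; linarith
      · simp only [Fin.mk_one]
        rw [e1]; simp
  have hset2 : ({p : Γ × Multiplicative (Fin 2 → ℤ) | (⇑φ)^[k] p = p} =
      {p : Γ × Multiplicative (Fin 2 → ℤ) | ∃ t : ℤ,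
        Multiplicative.toAdd p.2 = ![0, t] ∧
        Multiplicative.toAdd (ρ p.1) + (m : ℤ) * t = 0}) := by
    ext p
    rw [Set.mem_setOf_eq, hfix p, Set.mem_setOf_eq]
    exact hlin _ _
  refine ⟨hset1, hset2, ?_, ?_⟩
  -- image
  · rw [hset2]
    ext u
    constructor
    · rintro ⟨⟨u', v⟩, ⟨t, hv, ht⟩, rfl⟩
      exact ⟨-t, by simp only at ht ⊢; linarith⟩
    · rintro ⟨s, hs⟩
      refine ⟨(u, Multiplicative.ofAdd ![0, -s]), ⟨-s, ?_, ?_⟩, rfl⟩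
      · rw [toAdd_ofAdd]
      · simp only [toAdd_ofAdd]
        rw [hs]; ring
  -- the subgroup
  · refine ⟨Subgroup.comap ρ (AddSubgroup.toSubgroup (AddSubgroup.zmultiples (m : ℤ))), ?_, ?_⟩
    · ext u
      simp only [Subgroup.coe_comap, Set.mem_preimage, SetLike.mem_coe, Set.mem_setOf_eq]
      exact Int.mem_zmultiples_iff
    · rw [Subgroup.index_comap_of_surjective _ hρ, AddSubgroup.index_toSubgroup,
        Int.index_zmultiples, Int.natAbs_natCast]
end

section
/- For integers n ≥ 2 and m ≥ 1, let L_m be the n × n integer matrix whose first row is (m+1, m, m, …, m) and whose i-th row, for 2 ≤ i ≤ n, has entry 1 in columns 1 through i and entry 0 in columns i+1 through n. Then the characteristic polynomial of L_m is det(λI − L_m) = (λ − 1)ⁿ − m·λⁿ⁻¹. -/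
/-!
`L_m` is the lower-triangular all-ones matrix `A` with `m` added to every entry of its first row.
The determinant is linear in the first row, so `det (X - L_m) = det (X - A) - m · det B`, where
`B` is `X - A` with first row replaced by ones. The first term is `(X - 1)ⁿ`; adding the first row
of `B` to all the others makes it upper triangular with diagonal `1, X, …, X`.
-/

/-- The `n × n` integer matrix `L_m` from Section 4 of the paper: the first row
is `(m+1, m, m, …, m)` and, for `2 ≤ i ≤ n` (1-indexed), the `i`-th row has
entry `1` in columns `1` through `i` and `0` in columns `i+1` through `n`. -/
def Lmat (n : ℕ) (m : ℤ) : Matrix (Fin n) (Fin n) ℤ :=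
  Matrix.of fun i j =>
    if (i : ℕ) = 0 then (if (j : ℕ) = 0 then m + 1 else m)
    else (if j ≤ i then 1 else 0)

open Polynomial Matrix

namespace Matrix

variable {ι R : Type*} [Fintype ι] [DecidableEq ι] [CommRing R]

theorem charpoly_add_const_row (M : Matrix ι ι R) (k : ι) (c : R) :
    (M + of fun i _ => if i = k then c else 0).charpoly =
      M.charpoly - C c * ((charmatrix M).updateRow k 1).det := by
  have hrow : charmatrix (M + of fun i _ => if i = k then c else 0) =
      (charmatrix M).updateRow k (charmatrix M k + (-C c) • 1) := by
    ext i j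
    by_cases hi : i = k
    · subst hi; simp [charmatrix_apply]; ring
    · simp [charmatrix_apply, hi]
  rw [charpoly, hrow, det_updateRow_add, updateRow_eq_self, det_updateRow_smul, ← charpoly]
  ring

end Matrix

def lowerOnes (n : ℕ) (R : Type*) [Zero R] [One R] : Matrix (Fin n) (Fin n) R :=
  of fun i j => if j ≤ i then 1 else 0

section lowerOnes

variable (n : ℕ) (R : Type*) [CommRing R]

theorem lowerOnes_isLowerTriangular : (lowerOnes n R).IsLowerTriangular := by
  intro i j hij
  simp [lowerOnes, not_le.mpr (show i < j from hij)]

theorem charpoly_lowerOnes : (lowerOnes n R).charpoly = (X - 1) ^ n := by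
  rw [charpoly, det_of_isLowerTriangular _ (lowerOnes_isLowerTriangular n R).charmatrix]
  simp [lowerOnes]

theorem det_updateRow_zero_one_charmatrix_lowerOnes [NeZero n] :
    ((charmatrix (lowerOnes n R)).updateRow 0 1).det = X ^ (n - 1) := by
  set U : Matrix (Fin n) (Fin n) R[X] :=
    of fun i j => if i = 0 then 1 else if i = j then X else if i < j then 1 else 0
  have hU : U.det = ((charmatrix (lowerOnes n R)).updateRow 0 1).det := by
    refine det_eq_of_forall_row_eq_smul_add_const (fun i => if i = 0 then 0 else 1) 0 rfl ?_
    intro i j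
    by_cases hi : i = 0
    · simp [U, hi]
    · rcases lt_trichotomy i j with h | rfl | h
      · simp [U, hi, h.ne, h, lowerOnes, not_le.mpr h]
      · simp [U, hi, lowerOnes]
      · simp [U, hi, h.ne', not_lt.mpr h.le, lowerOnes, h.le]
  have hUtri : U.IsUpperTriangular := by
    intro i j (hij : j < i)
    have : i ≠ 0 := fun h => by simp [h] at hij
    simp [U, this, hij.ne', not_lt.mpr hij.le]
  rw [← hU, det_of_isUpperTriangular hUtri]
  obtain ⟨k, rfl⟩ : ∃ k, n = k + 1 := Nat.exists_eq_add_one.mpr (NeZero.pos n)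
  simp [Fin.prod_univ_succ, U, Fin.succ_ne_zero]

end lowerOnes

theorem Lmat_eq (n : ℕ) [NeZero n] (m : ℤ) :
    Lmat n m = lowerOnes n ℤ + of fun i _ => if i = 0 then m else 0 := by
  ext i j
  by_cases hi : i = 0 <;> by_cases hj : j = 0 <;>
    simp [Lmat, lowerOnes, hi, hj, Fin.val_eq_zero_iff, add_comm]

theorem charpoly_Lmat_general (n : ℕ) (hn : 2 ≤ n) (m : ℤ) :
    (Lmat n m).charpoly = (Polynomial.X - 1) ^ n - Polynomial.C m * Polynomial.X ^ (n - 1) := by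
  have : NeZero n := ⟨by omega⟩
  rw [Lmat_eq, charpoly_add_const_row, charpoly_lowerOnes,
    det_updateRow_zero_one_charmatrix_lowerOnes]

/-- For `n ≥ 2` and `m ≥ 1`, the characteristic polynomial of
the matrix `L_m` is `det (λI − L_m) = (λ − 1)ⁿ − m·λⁿ⁻¹`. -/
theorem charpoly_Lmat (n : ℕ) (hn : 2 ≤ n) (m : ℤ) (hm : 1 ≤ m) :
    (Lmat n m).charpoly = (Polynomial.X - 1) ^ n - Polynomial.C m * Polynomial.X ^ (n - 1) :=
  charpoly_Lmat_general n hn m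
end

section
/- For integers n ≥ 2, k ≥ 1, and m > 2ⁿ, let L_m be the n × n integer matrix whose first row is (m+1, m, m, …, m) and whose i-th row, for 2 ≤ i ≤ n, has entry 1 in columns 1 through i and entry 0 in columns i+1 through n. Then det(I − L_mᵏ) ≠ 0, i.e. I − L_mᵏ is invertible; equivalently, no k-th root of unity is an eigenvalue of L_m. -/
/-!
If `det (I − L_mᵏ) = 0`, some eigenvalue `μ` of `L_m` is a `k`-th root of unity. For an
eigenvector `w`, the partial sums `sᵢ = w₀ + ⋯ + wᵢ` satisfy `μ sᵢ₋₁ = (μ − 1) sᵢ` (rows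
`2, …, n`) and `m sₙ₋₁ = (μ − 1) s₀` (row 1); going once around this cycle gives
`(μ − 1)ⁿ = m μⁿ⁻¹`. Since `|μ| = 1`, this forces `m = |μ − 1|ⁿ ≤ 2ⁿ`.
-/

open Finset Matrix Polynomial

theorem Matrix.exists_mulVec_eq_smul_of_det_one_sub_pow_eq_zero {K ι : Type*} [Field K]
    [IsAlgClosed K] [Fintype ι] [DecidableEq ι] {A : Matrix ι ι K} {k : ℕ} (hk : k ≠ 0)
    (h : (1 - A ^ k).det = 0) : ∃ μ : K, μ ^ k = 1 ∧ ∃ v ≠ 0, A *ᵥ v = μ • v := by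
  have h1 : (1 : K) ∈ spectrum K (A ^ k) := by
    rwa [mem_spectrum_iff_isRoot_charpoly, IsRoot, eval_charpoly, map_one]
  rw [spectrum.map_pow_of_pos A (Nat.pos_of_ne_zero hk)] at h1
  obtain ⟨μ, hμ, hμk⟩ := h1
  rw [mem_spectrum_iff_isRoot_charpoly, IsRoot, eval_charpoly, ← exists_mulVec_eq_zero_iff] at hμ
  obtain ⟨v, hv, hμv⟩ := hμ
  refine ⟨μ, hμk, v, hv, ?_⟩
  rw [sub_mulVec, sub_eq_zero] at hμv
  rw [← hμv]
  ext i
  simp [mulVec_diagonal]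

theorem Fin.sum_Iic_succ {M : Type*} [AddCommMonoid M] {n : ℕ} (w : Fin (n + 1) → M)
    (i : Fin n) : ∑ j ∈ Iic i.succ, w j = ∑ j ∈ Iic i.castSucc, w j + w i.succ := by
  rw [Iic_eq_cons_Iio, Finset.sum_cons, add_comm, ← orderSucc_castSucc,
    Iio_succ_eq_Iic_of_not_isMax (Fin.castSucc_lt_last i).not_isMax]

section
variable {K : Type*} [CommRing K] {n : ℕ} (m : ℤ) (w : Fin (n + 1) → K)

theorem Lmat_map_mulVec_succ (i : Fin n) :
    ((Lmat (n + 1) m).map (Int.cast : ℤ → K) *ᵥ w) i.succ = ∑ j ∈ Iic i.succ, w j := by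
  simp [mulVec, dotProduct, Lmat, ← sum_filter, filter_ge_eq_Iic]

theorem Lmat_map_mulVec_zero :
    ((Lmat (n + 1) m).map (Int.cast : ℤ → K) *ᵥ w) 0 = m * ∑ j, w j + w 0 := by
  simp only [mulVec, dotProduct, Lmat, map_apply, of_apply, Fin.val_eq_zero_iff, Fin.succ_ne_zero,
    ↓reduceIte, Int.cast_ite, Int.cast_add, Int.cast_one, ite_mul, Fin.sum_univ_succ, mul_add,
    mul_sum]
  ring

end

section
variable {K : Type*} [CommRing K] {n : ℕ} {μ c : K} {s : Fin (n + 1) → K}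

theorem pow_mul_apply_zero_eq_sub_one_pow_mul_apply
    (hstep : ∀ i : Fin n, μ * s i.castSucc = (μ - 1) * s i.succ) (i : Fin (n + 1)) :
    μ ^ (i : ℕ) * s 0 = (μ - 1) ^ (i : ℕ) * s i := by
  induction i using Fin.induction with
  | zero => simp
  | succ i ih =>
    rw [Fin.val_castSucc] at ih
    calc μ ^ (i + 1 : ℕ) * s 0 = μ * (μ ^ (i : ℕ) * s 0) := by ring
      _ = (μ - 1) ^ (i : ℕ) * (μ * s i.castSucc) := by rw [ih]; ring
      _ = (μ - 1) ^ (i + 1 : ℕ) * s i.succ := by rw [hstep]; ring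

variable [IsDomain K]

theorem eq_zero_of_recurrence_of_apply_zero_eq_zero (hμ : μ ≠ 0) (hc : c ≠ 0)
    (hstep : ∀ i : Fin n, μ * s i.castSucc = (μ - 1) * s i.succ)
    (hwrap : c * s (Fin.last n) = (μ - 1) * s 0) (h0 : s 0 = 0) : s = 0 := by
  funext i
  induction i using Fin.reverseInduction with
  | last => simpa [h0, hc] using hwrap
  | cast i ih => simpa [ih, hμ] using hstep i

theorem sub_one_pow_eq_mul_pow_of_recurrence (hμ : μ ≠ 0) (hc : c ≠ 0)
    (hstep : ∀ i : Fin n, μ * s i.castSucc = (μ - 1) * s i.succ)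
    (hwrap : c * s (Fin.last n) = (μ - 1) * s 0) (hs : s ≠ 0) :
    (μ - 1) ^ (n + 1) = c * μ ^ n := by
  have h0 : s 0 ≠ 0 := fun h0 ↦
    hs (eq_zero_of_recurrence_of_apply_zero_eq_zero hμ hc hstep hwrap h0)
  have hlast := pow_mul_apply_zero_eq_sub_one_pow_mul_apply hstep (Fin.last n)
  rw [Fin.val_last] at hlast
  apply mul_right_cancel₀ h0
  calc (μ - 1) ^ (n + 1) * s 0 = (μ - 1) ^ n * ((μ - 1) * s 0) := by ring
    _ = c * ((μ - 1) ^ n * s (Fin.last n)) := by rw [← hwrap]; ring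
    _ = c * μ ^ n * s 0 := by rw [← hlast]; ring

theorem sub_one_pow_eq_of_Lmat_map_mulVec_eq_smul {m : ℤ} (hμ : μ ≠ 0) (hm : (m : K) ≠ 0)
    {w : Fin (n + 1) → K} (hw : w ≠ 0)
    (h : (Lmat (n + 1) m).map (Int.cast : ℤ → K) *ᵥ w = μ • w) :
    (μ - 1) ^ (n + 1) = m * μ ^ n := by
  have hrow (i : Fin n) : ∑ j ∈ Iic i.succ, w j = μ * w i.succ := by
    rw [← Lmat_map_mulVec_succ, h, Pi.smul_apply, smul_eq_mul]
  refine sub_one_pow_eq_mul_pow_of_recurrence (s := fun i => ∑ j ∈ Iic i, w j) hμ hm ?_ ?_ ?_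
  · intro i
    linear_combination hrow i - μ * Fin.sum_Iic_succ w i
  · have := Lmat_map_mulVec_zero m w
    rw [h, Pi.smul_apply, smul_eq_mul] at this
    simp only [← bot_eq_zero, ← Fin.top_eq_last, Iic_bot, Iic_top, sum_singleton]
    linear_combination -this
  · intro hs
    apply hw
    funext i
    induction i using Fin.cases with
    | zero => simpa [← bot_eq_zero, Iic_bot] using congrFun hs 0
    | succ i => simpa [hrow, hμ] using congrFun hs i.succ

end

theorem det_one_sub_Lmat_pow_ne_zero_general (n : ℕ) (k : ℕ) (hk : 1 ≤ k)
    (m : ℤ) (hm : 2 ^ n < m) :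
    ((1 : Matrix (Fin n) (Fin n) ℤ) - (Lmat n m) ^ k).det ≠ 0 := by
  intro hdet
  have hdetC : (1 - (Lmat n m).map (Int.cast : ℤ → ℂ) ^ k).det = 0 := by
    have := congrArg (Int.castRingHom ℂ) hdet
    rwa [RingHom.map_det, map_sub, map_one, map_pow, map_zero] at this
  obtain ⟨μ, hμk, w, hw, hμw⟩ :=
    exists_mulVec_eq_smul_of_det_one_sub_pow_eq_zero (by omega) hdetC
  have hμ : ‖μ‖ = 1 := Complex.norm_eq_one_of_pow_eq_one hμk (by omega)
  cases n with
  | zero => exact hw (Subsingleton.elim _ _)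
  | succ n =>
    have hm_pos : 0 < m := lt_trans (by positivity) hm
    have hm0 : (m : ℂ) ≠ 0 := Int.cast_ne_zero.mpr hm_pos.ne'
    have hμ0 : μ ≠ 0 := norm_ne_zero_iff.mp (by rw [hμ]; exact one_ne_zero)
    have hroot := sub_one_pow_eq_of_Lmat_map_mulVec_eq_smul hμ0 hm0 hw hμw
    have hle : (m : ℝ) ≤ 2 ^ (n + 1) := calc
      (m : ℝ) = ‖μ - 1‖ ^ (n + 1) := by
        rw [← norm_pow, hroot, norm_mul, norm_pow, hμ, one_pow, mul_one, Complex.norm_intCast,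
          abs_of_pos (Int.cast_pos.mpr hm_pos)]
      _ ≤ 2 ^ (n + 1) := by
        gcongr
        exact (norm_sub_le μ 1).trans (by rw [hμ, norm_one]; norm_num)
    exact hle.not_gt (by exact_mod_cast hm)

/-- For `n ≥ 2`, `k ≥ 1` and `m > 2ⁿ`, the matrix
`I − L_mᵏ` is invertible, i.e. `det (I − L_mᵏ) ≠ 0`. -/
theorem det_one_sub_Lmat_pow_ne_zero (n : ℕ) (hn : 2 ≤ n) (k : ℕ) (hk : 1 ≤ k)
    (m : ℤ) (hm : 2 ^ n < m) :
    ((1 : Matrix (Fin n) (Fin n) ℤ) - (Lmat n m) ^ k).det ≠ 0 :=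
  det_one_sub_Lmat_pow_ne_zero_general n k hk m hm
end
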